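/- arXiv:1108.0452 — 7 statements merged into one kernel-verified Lean document; each statement's English description precedes it below -/
import Mathlib

section
/- Every Milnor algebra is unimodular, i.e. tr(ad_x) = 0 for all x ∈ g. -/
/-!
For `x` in `S`, `ad_x` is skew-adjoint, so its diagonal entries in an orthonormal basis vanish.
For `x` in `D = [g, g]`, `ad_x` maps `g` into `D` and kills `D`, so `ad_x ∘ ad_x = 0`.
In both cases `tr ad_x = 0`, and `x ↦ tr ad_x` is linear while `span S ⊔ D` contains
`span S ⊔ (span S)ᗮ = ⊤`.
-/

open scoped RealInnerProductSpace

namespace LinearMap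

theorem trace_eq_zero_of_inner_map_add_inner_map_eq_zero {V : Type*} [NormedAddCommGroup V]
    [InnerProductSpace ℝ V] [FiniteDimensional ℝ V] {f : V →ₗ[ℝ] V}
    (hf : ∀ y z : V, ⟪f y, z⟫ + ⟪y, f z⟫ = 0) :
    trace ℝ V f = 0 := by
  rw [trace_eq_sum_inner f (stdOrthonormalBasis ℝ V)]
  refine Finset.sum_eq_zero fun i _ => ?_
  have h := hf (stdOrthonormalBasis ℝ V i) (stdOrthonormalBasis ℝ V i)
  rw [real_inner_comm] at h
  linarith

theorem trace_eq_zero_of_range_le_of_le_ker {R M : Type*} [CommRing R] [AddCommGroup M]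
    [Module R M] [Module.Free R M] [Module.Finite R M] [IsReduced R] {f : M →ₗ[R] M}
    (D : Submodule R M) (hrange : range f ≤ D) (hker : D ≤ ker f) :
    trace R M f = 0 := by
  have hsq : f ^ 2 = 0 := by
    ext y
    exact hker (hrange (mem_range_self f y))
  exact (isNilpotent_trace_of_isNilpotent ⟨2, hsq⟩).eq_zero

end LinearMap

open LinearMap Submodule in
theorem milnor_unimodular_general {V : Type*} [NormedAddCommGroup V] [InnerProductSpace ℝ V]
    [FiniteDimensional ℝ V]
    (B : V →ₗ[ℝ] V →ₗ[ℝ] V)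
    (S : Set V)
    (hS : S = {x : V | ∀ y z : V, ⟪B x y, z⟫ + ⟪y, B x z⟫ = 0})
    (D : Submodule ℝ V)
    (hD : D = Submodule.span ℝ {w : V | ∃ x y : V, B x y = w})
    (hDab : ∀ u ∈ D, ∀ v ∈ D, B u v = 0)
    (hperp : ∀ v : V, v ∈ D ↔ ∀ s ∈ S, ⟪s, v⟫ = 0) :
    ∀ x : V, LinearMap.trace ℝ V (B x) = 0 := by
  have hspan_le : span ℝ S ≤ ker (trace ℝ V ∘ₗ B) := span_le.mpr fun s hs =>
    trace_eq_zero_of_inner_map_add_inner_map_eq_zero (hS.subset hs)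
  have hD_le : D ≤ ker (trace ℝ V ∘ₗ B) := fun q hq =>
    trace_eq_zero_of_range_le_of_le_ker D
      (by rintro _ ⟨y, rfl⟩; exact hD.ge (subset_span ⟨q, y, rfl⟩)) (hDab q hq)
  have horth_le : (span ℝ S)ᗮ ≤ D := fun v hv =>
    (hperp v).mpr fun s hs => inner_right_of_mem_orthogonal (subset_span hs) hv
  have htop : ⊤ ≤ ker (trace ℝ V ∘ₗ B) := by
    rw [← sup_orthogonal_of_hasOrthogonalProjection (K := span ℝ S)]
    exact sup_le hspan_le (horth_le.trans hD_le)
  exact fun x => htop mem_top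

/-- Every Milnor algebra is unimodular: `tr (ad_x) = 0` for every `x`. -/
theorem milnor_unimodular {V : Type*} [NormedAddCommGroup V] [InnerProductSpace ℝ V]
    [FiniteDimensional ℝ V]
    (B : V →ₗ[ℝ] V →ₗ[ℝ] V)
    (hanti : ∀ x y : V, B x y = - B y x)
    (hjac : ∀ x y z : V, B x (B y z) = B (B x y) z + B y (B x z))
    (S : Set V)
    (hS : S = {x : V | ∀ y z : V, ⟪B x y, z⟫ + ⟪y, B x z⟫ = 0})
    (D : Submodule ℝ V)
    (hD : D = Submodule.span ℝ {w : V | ∃ x y : V, B x y = w})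
    (hSab : ∀ x ∈ S, ∀ y ∈ S, B x y = 0)
    (hDab : ∀ u ∈ D, ∀ v ∈ D, B u v = 0)
    (hperp : ∀ v : V, v ∈ D ↔ ∀ s ∈ S, ⟪s, v⟫ = 0) :
    ∀ x : V, LinearMap.trace ℝ V (B x) = 0 :=
  milnor_unimodular_general B S hS D hD hDab hperp
end

section
/- Every nilpotent Milnor algebra is abelian. -/
open scoped RealInnerProductSpace

/-- The lower central series of a bilinear bracket `B` on a real vector space. -/
def lowerCentral {V : Type*} [AddCommGroup V] [Module ℝ V]
    (B : V →ₗ[ℝ] V →ₗ[ℝ] V) : ℕ → Submodule ℝ V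
  | 0 => ⊤
  | n + 1 => Submodule.span ℝ {w : V | ∃ x : V, ∃ y ∈ lowerCentral B n, B x y = w}

/-! For `s ∈ S` the map `B s` is skew-adjoint, and nilpotent because `(B s)^m` maps into the
`m`-th term of the lower central series. A skew-adjoint `A` satisfies `‖A v‖² = -⟪v, A² v⟫`,
so `ker A² = ker A`, hence `ker Aⁿ = ker A` for `n ≥ 1`, and a nilpotent skew-adjoint map
vanishes. Thus `span S` is central, and every vector is an element of `span S` plus one of
`(span S)ᗮ = D`, on which the bracket vanishes. -/

section Skew

variable {V : Type*} [NormedAddCommGroup V] [InnerProductSpace ℝ V] {A : V →ₗ[ℝ] V}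

lemma apply_eq_zero_of_apply_apply_eq_zero_of_skew (hA : ∀ y z : V, ⟪A y, z⟫ + ⟪y, A z⟫ = 0)
    {v : V} (h : A (A v) = 0) : A v = 0 := by
  have hnorm : ⟪A v, A v⟫ = 0 := by simpa [h] using hA v (A v)
  exact inner_self_eq_zero.mp hnorm

lemma apply_eq_zero_of_pow_succ_apply_eq_zero_of_skew
    (hA : ∀ y z : V, ⟪A y, z⟫ + ⟪y, A z⟫ = 0) (n : ℕ) {v : V} (h : (A ^ (n + 1)) v = 0) :
    A v = 0 := by
  induction n with
  | zero => simpa using h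
  | succ k ih =>
    apply ih
    rw [pow_succ', Module.End.mul_apply] at h ⊢
    exact apply_eq_zero_of_apply_apply_eq_zero_of_skew hA (by rwa [pow_succ'] at h)

lemma eq_zero_of_isNilpotent_of_skew (hA : ∀ y z : V, ⟪A y, z⟫ + ⟪y, A z⟫ = 0)
    (hnil : IsNilpotent A) : A = 0 := by
  obtain ⟨n, hn⟩ := hnil
  have hn' : A ^ (n + 1) = 0 := by rw [pow_succ, hn, zero_mul]
  ext v
  exact apply_eq_zero_of_pow_succ_apply_eq_zero_of_skew hA n (by rw [hn']; rfl)

end Skew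

section LowerCentral

variable {V : Type*} [AddCommGroup V] [Module ℝ V] (B : V →ₗ[ℝ] V →ₗ[ℝ] V)

lemma pow_apply_mem_lowerCentral (x : V) (m : ℕ) (v : V) :
    (B x ^ m) v ∈ lowerCentral B m := by
  induction m generalizing v with
  | zero => trivial
  | succ m ih =>
    rw [pow_succ', Module.End.mul_apply]
    exact Submodule.subset_span ⟨x, _, ih v, rfl⟩

lemma isNilpotent_apply_of_lowerCentral_eq_bot {n : ℕ} (hn : lowerCentral B n = ⊥) (x : V) :
    IsNilpotent (B x) := by
  refine ⟨n, LinearMap.ext fun v => ?_⟩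
  simpa [hn] using pow_apply_mem_lowerCentral B x n v

end LowerCentral

theorem milnor_nilpotent_abelian_general {V : Type*} [NormedAddCommGroup V]
    [InnerProductSpace ℝ V] [FiniteDimensional ℝ V]
    (B : V →ₗ[ℝ] V →ₗ[ℝ] V)
    (hanti : ∀ x y : V, B x y = - B y x)
    (S : Set V)
    (hS : S = {x : V | ∀ y z : V, ⟪B x y, z⟫ + ⟪y, B x z⟫ = 0})
    (D : Submodule ℝ V)
    (hDab : ∀ u ∈ D, ∀ v ∈ D, B u v = 0)
    (hperp : ∀ v : V, v ∈ D ↔ ∀ s ∈ S, ⟪s, v⟫ = 0)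
    (hnilp : ∃ n : ℕ, lowerCentral B n = ⊥) :
    ∀ x y : V, B x y = 0 := by
  obtain ⟨n, hn⟩ := hnilp
  have hSker : Submodule.span ℝ S ≤ LinearMap.ker B := Submodule.span_le.mpr fun s hs => by
    rw [hS] at hs
    exact eq_zero_of_isNilpotent_of_skew hs (isNilpotent_apply_of_lowerCentral_eq_bot B hn s)
  have hdecomp : ∀ x : V, ∃ s ∈ Submodule.span ℝ S, ∃ d ∈ D, x = s + d := fun x => by
    obtain ⟨s, hs, d, hd, rfl⟩ := (Submodule.span ℝ S).exists_add_mem_mem_orthogonal x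
    exact ⟨s, hs, d, (hperp d).mpr fun t ht =>
      Submodule.inner_right_of_mem_orthogonal (Submodule.subset_span ht) hd, rfl⟩
  intro x y
  obtain ⟨s, hs, d, hd, rfl⟩ := hdecomp x
  obtain ⟨s', hs', d', hd', rfl⟩ := hdecomp y
  have hBs : B s = 0 := hSker hs
  have hBs' : B s' = 0 := hSker hs'
  rw [map_add, map_add, hBs, zero_add, hanti d s', hBs', hDab d hd d' hd']
  simp

/-- Every nilpotent Milnor algebra is abelian. -/
theorem milnor_nilpotent_abelian {V : Type*} [NormedAddCommGroup V]
    [InnerProductSpace ℝ V] [FiniteDimensional ℝ V]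
    (B : V →ₗ[ℝ] V →ₗ[ℝ] V)
    (hanti : ∀ x y : V, B x y = - B y x)
    (hjac : ∀ x y z : V, B x (B y z) = B (B x y) z + B y (B x z))
    (S : Set V)
    (hS : S = {x : V | ∀ y z : V, ⟪B x y, z⟫ + ⟪y, B x z⟫ = 0})
    (D : Submodule ℝ V)
    (hD : D = Submodule.span ℝ {w : V | ∃ x y : V, B x y = w})
    (hSab : ∀ x ∈ S, ∀ y ∈ S, B x y = 0)
    (hDab : ∀ u ∈ D, ∀ v ∈ D, B u v = 0)
    (hperp : ∀ v : V, v ∈ D ↔ ∀ s ∈ S, ⟪s, v⟫ = 0)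
    (hnilp : ∃ n : ℕ, lowerCentral B n = ⊥) :
    ∀ x y : V, B x y = 0 :=
  milnor_nilpotent_abelian_general B hanti S hS D hDab hperp hnilp
end

section
/- Let g = S ⊕ [g,g] be a Milnor algebra and define the bilinear map A : g × g → g by A_x = ad_x for x ∈ S and A_x = 0 for x ∈ [g,g] (extended linearly). Then A_{[x,y]} = A_x ∘ A_y − A_y ∘ A_x for all x, y ∈ g; i.e., the curvature of A vanishes. -/
open scoped RealInnerProductSpace

/-!
Writing `x = s + d` with `s ∈ S` and `d ∈ [g,g]` gives `A_x = ad_s`. The bracket `[x,y]` lies in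
`[g,g]`, where `A` vanishes, while by the Jacobi identity `[ad_s, ad_t] = ad_{[s,t]}`, which is
zero because `S` is abelian.
-/

section Jacobi

variable {R M : Type*} [CommRing R] [AddCommGroup M] [Module R M]

theorem comp_sub_comp_eq_of_jacobi (B : M →ₗ[R] M →ₗ[R] M)
    (hjac : ∀ x y z : M, B x (B y z) = B (B x y) z + B y (B x z)) (x y : M) :
    B x ∘ₗ B y - B y ∘ₗ B x = B (B x y) := by
  ext z
  simp only [LinearMap.sub_apply, LinearMap.comp_apply, hjac x y z, add_sub_cancel_right]

end Jacobi

theorem milnor_connection_flat_general {V : Type*} [NormedAddCommGroup V]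
    [InnerProductSpace ℝ V]
    (B : V →ₗ[ℝ] V →ₗ[ℝ] V)
    (hjac : ∀ x y z : V, B x (B y z) = B (B x y) z + B y (B x z))
    (S : Set V)
    (D : Submodule ℝ V)
    (hD : D = Submodule.span ℝ {w : V | ∃ x y : V, B x y = w})
    (hSab : ∀ x ∈ S, ∀ y ∈ S, B x y = 0)
    (hdec : ∀ v : V, ∃ s ∈ S, ∃ d ∈ D, v = s + d)
    (A : V →ₗ[ℝ] V →ₗ[ℝ] V)
    (hAS : ∀ x ∈ S, A x = B x)
    (hAD : ∀ x ∈ D, A x = 0) :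
    ∀ x y : V, A (B x y) = A x ∘ₗ A y - A y ∘ₗ A x := by
  have hA_eq_ad : ∀ v, ∃ s ∈ S, A v = B s := by
    intro v
    obtain ⟨s, hs, d, hd, rfl⟩ := hdec v
    exact ⟨s, hs, by rw [map_add, hAS s hs, hAD d hd, add_zero]⟩
  intro x y
  obtain ⟨s, hs, hAx⟩ := hA_eq_ad x
  obtain ⟨t, ht, hAy⟩ := hA_eq_ad y
  have hbracket_mem : B x y ∈ D := hD ▸ Submodule.subset_span ⟨x, y, rfl⟩
  rw [hAD _ hbracket_mem, hAx, hAy, comp_sub_comp_eq_of_jacobi B hjac, hSab s hs t ht, map_zero]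

/-- In a Milnor algebra `g = S ⊕ [g,g]`, the bilinear map `A` defined by `A_x = ad_x`
for `x ∈ S` and `A_x = 0` for `x ∈ [g,g]` is flat:
`A_{[x,y]} = A_x ∘ A_y − A_y ∘ A_x` for all `x, y`. -/
theorem milnor_connection_flat {V : Type*} [NormedAddCommGroup V]
    [InnerProductSpace ℝ V] [FiniteDimensional ℝ V]
    (B : V →ₗ[ℝ] V →ₗ[ℝ] V)
    (hanti : ∀ x y : V, B x y = - B y x)
    (hjac : ∀ x y z : V, B x (B y z) = B (B x y) z + B y (B x z))
    (S : Set V)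
    (hS : S = {x : V | ∀ y z : V, ⟪B x y, z⟫ + ⟪y, B x z⟫ = 0})
    (D : Submodule ℝ V)
    (hD : D = Submodule.span ℝ {w : V | ∃ x y : V, B x y = w})
    (hSab : ∀ x ∈ S, ∀ y ∈ S, B x y = 0)
    (hDab : ∀ u ∈ D, ∀ v ∈ D, B u v = 0)
    (hperp : ∀ v : V, v ∈ D ↔ ∀ s ∈ S, ⟪s, v⟫ = 0)
    (hdec : ∀ v : V, ∃ s ∈ S, ∃ d ∈ D, v = s + d)
    (A : V →ₗ[ℝ] V →ₗ[ℝ] V)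
    (hAS : ∀ x ∈ S, A x = B x)
    (hAD : ∀ x ∈ D, A x = 0) :
    ∀ x y : V, A (B x y) = A x ∘ₗ A y - A y ∘ₗ A x :=
  milnor_connection_flat_general B hjac S D hD hSab hdec A hAS hAD
end

section
/- In a Milnor algebra g = S ⊕ [g,g], the Levi-Civita product satisfies A_x = ad_x for x ∈ S and A_x = 0 for x ∈ [g,g], where A is defined by the Koszul formula 2⟨A_x y, z⟩ = ⟨[x,y],z⟩ + ⟨[z,x],y⟩ + ⟨[z,y],x⟩. -/
/-!
For `x ∈ S`, skew-adjointness of `ad_x` and `x ⊥ [g,g]` turn the Koszul formula into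
`⟪A_x y, z⟫ = ⟪[x,y], z⟫`. For `x ∈ [g,g]` the Koszul sum is bilinear in `(y, z)`, so it suffices
that it vanishes when each of `y`, `z` lies in `S` or in `S^⊥ = [g,g]`; in all four cases the terms
cancel because both summands are abelian, `[g,g] ⊥ S`, and `ad_s` is skew for `s ∈ S`.
-/

open scoped RealInnerProductSpace

namespace LinearMap

variable {R M N P : Type*} [CommSemiring R] [AddCommMonoid M] [AddCommMonoid N]
  [AddCommMonoid P] [Module R M] [Module R N] [Module R P]

theorem ext_on_codisjoint₂ {f g : M →ₗ[R] N →ₗ[R] P} {S T : Submodule R M}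
    {S' T' : Submodule R N} (hST : Codisjoint S T) (hST' : Codisjoint S' T')
    (h : ∀ y, y ∈ S ∨ y ∈ T → ∀ z, z ∈ S' ∨ z ∈ T' → f y z = g y z) : f = g := by
  have hrow : ∀ y, y ∈ S ∨ y ∈ T → f y = g y := fun y hy =>
    ext_on_codisjoint hST' (fun z hz => h y hy z (.inl hz)) (fun z hz => h y hy z (.inr hz))
  exact ext_on_codisjoint hST (fun y hy => hrow y (.inl hy)) (fun y hy => hrow y (.inr hy))

end LinearMap

section Milnor

variable {V : Type*} [NormedAddCommGroup V] [InnerProductSpace ℝ V]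

def skewAdSubmodule (B : V →ₗ[ℝ] V →ₗ[ℝ] V) : Submodule ℝ V where
  carrier := {x | ∀ y z, ⟪B x y, z⟫ + ⟪y, B x z⟫ = 0}
  add_mem' {a b} ha hb y z := by
    simp only [map_add, LinearMap.add_apply, inner_add_left, inner_add_right] at ha hb ⊢
    linarith [ha y z, hb y z]
  zero_mem' y z := by simp
  smul_mem' c a ha y z := by
    simp only [map_smul, LinearMap.smul_apply, real_inner_smul_left,
      real_inner_smul_right] at ha ⊢
    rw [← mul_add, ha y z, mul_zero]

/-- Milnor's decomposition `g = S ⊕ [g,g]`, with `K` in the role of `S`. -/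
structure IsMilnorSplitting (B : V →ₗ[ℝ] V →ₗ[ℝ] V) (K : Submodule ℝ V) : Prop where
  skew : ∀ s ∈ K, ∀ y z, ⟪B s y, z⟫ + ⟪y, B s z⟫ = 0
  bracket_eq_zero : ∀ s ∈ K, ∀ t ∈ K, B s t = 0
  bracket_eq_zero_of_mem_orthogonal : ∀ u ∈ Kᗮ, ∀ v ∈ Kᗮ, B u v = 0
  bracket_mem_orthogonal : ∀ y z, B y z ∈ Kᗮ

variable {A B : V →ₗ[ℝ] V →ₗ[ℝ] V} {K : Submodule ℝ V}

theorem IsMilnorSplitting.levi_civita_eq_of_mem (hK : IsMilnorSplitting B K)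
    (hanti : ∀ x y : V, B x y = - B y x)
    (hKoszul : ∀ x y z : V, 2 * ⟪A x y, z⟫ = ⟪B x y, z⟫ + ⟪B z x, y⟫ + ⟪B z y, x⟫)
    {x : V} (hx : x ∈ K) : A x = B x := by
  ext y
  refine ext_inner_right ℝ fun z => ?_
  have hperp : ⟪B z y, x⟫ = 0 := K.inner_left_of_mem_orthogonal hx (hK.bracket_mem_orthogonal z y)
  have hskew := hK.skew x hx z y
  have hKz := hKoszul x y z
  rw [hanti z x, inner_neg_left, hperp] at hKz
  linarith [real_inner_comm (B x y) z]

theorem IsMilnorSplitting.levi_civita_eq_zero_of_mem_orthogonal (hK : IsMilnorSplitting B K)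
    [K.HasOrthogonalProjection] (hanti : ∀ x y : V, B x y = - B y x)
    (hKoszul : ∀ x y z : V, 2 * ⟪A x y, z⟫ = ⟪B x y, z⟫ + ⟪B z x, y⟫ + ⟪B z y, x⟫)
    {x : V} (hx : x ∈ Kᗮ) : A x = 0 := by
  suffices h : (innerₗ V).comp (A x) = 0 by
    ext y
    exact ext_inner_right ℝ fun z => by simpa using congr($h y z)
  have hcompl := K.isCompl_orthogonal.codisjoint
  refine LinearMap.ext_on_codisjoint₂ hcompl hcompl fun y hy z hz => ?_
  suffices ⟪B x y, z⟫ + ⟪B z x, y⟫ + ⟪B z y, x⟫ = 0 by simpa [this] using hKoszul x y z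
  have hbr := hK.bracket_mem_orthogonal
  rcases hy with hy | hy <;> rcases hz with hz | hz
  · rw [hK.bracket_eq_zero z hz y hy, K.inner_left_of_mem_orthogonal hz (hbr x y),
      K.inner_left_of_mem_orthogonal hy (hbr z x)]
    simp
  · rw [hK.bracket_eq_zero_of_mem_orthogonal z hz x hx, hanti x y, hanti z y]
    simp only [inner_zero_left, inner_neg_left]
    linarith [hK.skew y hy x z, real_inner_comm x (B y z)]
  · rw [hK.bracket_eq_zero_of_mem_orthogonal x hx y hy]
    linarith [hK.skew z hz x y, real_inner_comm x (B z y), inner_zero_left (𝕜 := ℝ) z]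
  · rw [hK.bracket_eq_zero_of_mem_orthogonal x hx y hy,
      hK.bracket_eq_zero_of_mem_orthogonal z hz x hx,
      hK.bracket_eq_zero_of_mem_orthogonal z hz y hy]
    simp

end Milnor

theorem milnor_levi_civita_general {V : Type*} [NormedAddCommGroup V]
    [InnerProductSpace ℝ V] [FiniteDimensional ℝ V]
    (B : V →ₗ[ℝ] V →ₗ[ℝ] V)
    (hanti : ∀ x y : V, B x y = - B y x)
    (S : Set V)
    (hS : S = {x : V | ∀ y z : V, ⟪B x y, z⟫ + ⟪y, B x z⟫ = 0})
    (D : Submodule ℝ V)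
    (hD : D = Submodule.span ℝ {w : V | ∃ x y : V, B x y = w})
    (hSab : ∀ x ∈ S, ∀ y ∈ S, B x y = 0)
    (hDab : ∀ u ∈ D, ∀ v ∈ D, B u v = 0)
    (hperp : ∀ v : V, v ∈ D ↔ ∀ s ∈ S, ⟪s, v⟫ = 0)
    (A : V →ₗ[ℝ] V →ₗ[ℝ] V)
    (hKoszul : ∀ x y z : V,
      2 * ⟪A x y, z⟫ = ⟪B x y, z⟫ + ⟪B z x, y⟫ + ⟪B z y, x⟫) :
    (∀ x ∈ S, A x = B x) ∧ (∀ x ∈ D, A x = 0) := by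
  have hSK : S = skewAdSubmodule B := hS
  have hDK : D = (skewAdSubmodule B)ᗮ := by
    ext v
    rw [hperp, Submodule.mem_orthogonal, hSK]
    rfl
  subst hSK hDK
  have hK : IsMilnorSplitting B (skewAdSubmodule B) :=
    { skew := fun s hs => hs
      bracket_eq_zero := hSab
      bracket_eq_zero_of_mem_orthogonal := hDab
      bracket_mem_orthogonal := fun y z => hD ▸ Submodule.subset_span ⟨y, z, rfl⟩ }
  exact ⟨fun x hx => hK.levi_civita_eq_of_mem hanti hKoszul hx,
    fun x hx => hK.levi_civita_eq_zero_of_mem_orthogonal hanti hKoszul hx⟩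

/-- In a Milnor algebra `g = S ⊕ [g,g]`, the Levi-Civita product given by the Koszul
formula satisfies `A_x = ad_x` for `x ∈ S` and `A_x = 0` for `x ∈ [g,g]`. -/
theorem milnor_levi_civita {V : Type*} [NormedAddCommGroup V]
    [InnerProductSpace ℝ V] [FiniteDimensional ℝ V]
    (B : V →ₗ[ℝ] V →ₗ[ℝ] V)
    (hanti : ∀ x y : V, B x y = - B y x)
    (hjac : ∀ x y z : V, B x (B y z) = B (B x y) z + B y (B x z))
    (S : Set V)
    (hS : S = {x : V | ∀ y z : V, ⟪B x y, z⟫ + ⟪y, B x z⟫ = 0})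
    (D : Submodule ℝ V)
    (hD : D = Submodule.span ℝ {w : V | ∃ x y : V, B x y = w})
    (hSab : ∀ x ∈ S, ∀ y ∈ S, B x y = 0)
    (hDab : ∀ u ∈ D, ∀ v ∈ D, B u v = 0)
    (hperp : ∀ v : V, v ∈ D ↔ ∀ s ∈ S, ⟪s, v⟫ = 0)
    (A : V →ₗ[ℝ] V →ₗ[ℝ] V)
    (hKoszul : ∀ x y z : V,
      2 * ⟪A x y, z⟫ = ⟪B x y, z⟫ + ⟪B z x, y⟫ + ⟪B z y, x⟫) :
    (∀ x ∈ S, A x = B x) ∧ (∀ x ∈ D, A x = 0) :=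
  milnor_levi_civita_general B hanti S hS D hD hSab hDab hperp A hKoszul
end

section
/- Let V be a nonzero finite-dimensional real inner product space and let F be a family of pairwise commuting skew-adjoint endomorphisms of V whose common kernel is trivial (⋂_{A∈F} ker A = 0). Then the dimension of V is even. -/
/-!
Over `ℝ` a skew-adjoint `A` satisfies `det A = det Aᵀ = det (-A) = (-1)^n det A`, so an injective
one lives only in even dimension. For an `A`-invariant subspace `W`, `A` maps the orthogonal
complement of `W ⊓ ker A` inside `W` injectively into itself; hence `W` and `W ⊓ ker A` have
dimensions of the same parity. Commutativity makes every `W ⊓ ker A` invariant under the whole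
family, so cutting `V` down one kernel at a time preserves parity and ends at the common kernel.
-/

open scoped RealInnerProductSpace
open Module LinearMap

theorem LinearMap.det_adjoint {𝕜 E : Type*} [RCLike 𝕜] [NormedAddCommGroup E]
    [InnerProductSpace 𝕜 E] [FiniteDimensional 𝕜 E] (A : E →ₗ[𝕜] E) :
    (adjoint A).det = star A.det := by
  let b := stdOrthonormalBasis 𝕜 E
  rw [← det_toMatrix b.toBasis, ← det_toMatrix b.toBasis, toMatrix_adjoint,
    Matrix.det_conjTranspose]

section

variable {V : Type*} [NormedAddCommGroup V] [InnerProductSpace ℝ V]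

theorem even_finrank_of_injective_of_skew [FiniteDimensional ℝ V] {A : V →ₗ[ℝ] V}
    (hskew : ∀ x y, ⟪A x, y⟫ = -⟪x, A y⟫) (hA : Function.Injective A) :
    Even (finrank ℝ V) := by
  have hadj : adjoint A = -A :=
    ((eq_adjoint_iff (-A) A).2 fun x y => by
      rw [LinearMap.neg_apply, inner_neg_left, hskew, neg_neg]).symm
  have hdet : A.det ≠ 0 := fun h => det_eq_zero_iff_ker_ne_bot.1 h (ker_eq_bot.2 hA)
  have hsign : (-1) ^ finrank ℝ V * A.det = A.det :=
    calc (-1) ^ finrank ℝ V * A.det = ((-1 : ℝ) • A).det := (det_smul _ _).symm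
      _ = (adjoint A).det := by rw [hadj, neg_one_smul]
      _ = A.det := det_adjoint A
  exact (neg_one_pow_eq_one_iff_even (by norm_num)).1 ((mul_eq_right₀ hdet).1 hsign)

theorem even_finrank_inf_ker_iff [FiniteDimensional ℝ V] {A : V →ₗ[ℝ] V}
    (hskew : ∀ x y, ⟪A x, y⟫ = -⟪x, A y⟫) {W : Submodule ℝ V} (hW : ∀ x ∈ W, A x ∈ W) :
    Even (finrank ℝ ↥(W ⊓ ker A)) ↔ Even (finrank ℝ W) := by
  set U := (W ⊓ ker A)ᗮ ⊓ W
  have hU : ∀ x ∈ U, A x ∈ U := by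
    rintro x ⟨hxK, hxW⟩
    refine ⟨(Submodule.mem_orthogonal _ _).2 fun k hk => ?_, hW x hxW⟩
    rw [← neg_eq_zero, ← hskew, mem_ker.1 hk.2, inner_zero_left]
  have hinj : Function.Injective (A.restrict hU) := by
    rw [← ker_eq_bot, Submodule.eq_bot_iff]
    rintro ⟨x, hxK, hxW⟩ hx
    have hxker : x ∈ W ⊓ ker A := ⟨hxW, congrArg Subtype.val hx⟩
    exact Subtype.ext ((Submodule.orthogonal_disjoint _).le_bot ⟨hxker, hxK⟩)
  have hU_even : Even (finrank ℝ U) :=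
    even_finrank_of_injective_of_skew (fun x y => hskew x y) hinj
  rw [← Submodule.finrank_add_inf_finrank_orthogonal (inf_le_left : W ⊓ ker A ≤ W),
    Nat.even_add, iff_true_intro hU_even, iff_true]

theorem even_finrank_inf_iInf_ker_iff [FiniteDimensional ℝ V] {F : Set (V →ₗ[ℝ] V)}
    (hskew : ∀ A ∈ F, ∀ x y, ⟪A x, y⟫ = -⟪x, A y⟫) (hcomm : ∀ A ∈ F, ∀ C ∈ F, A ∘ₗ C = C ∘ₗ A)
    (W : Submodule ℝ V) (hW : ∀ A ∈ F, ∀ x ∈ W, A x ∈ W) :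
    Even (finrank ℝ ↥(W ⊓ ⨅ A ∈ F, ker A)) ↔ Even (finrank ℝ W) := by
  induction W using WellFoundedLT.induction with
  | _ W ih =>
  by_cases h : ∀ A ∈ F, W ≤ ker A
  · rw [inf_eq_left.2 (le_iInf₂ h)]
  push Not at h
  obtain ⟨A, hA, hWA⟩ := h
  have hinv : ∀ C ∈ F, ∀ x ∈ W ⊓ ker A, C x ∈ W ⊓ ker A := by
    intro C hC x hx
    obtain ⟨hxW, hxA⟩ := Submodule.mem_inf.1 hx
    refine Submodule.mem_inf.2 ⟨hW C hC x hxW, ?_⟩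
    rw [mem_ker, ← comp_apply, hcomm A hA C hC, comp_apply, mem_ker.1 hxA, map_zero]
  rw [← even_finrank_inf_ker_iff (hskew A hA) (hW A hA), ← ih _ (inf_lt_left.2 hWA) hinv,
    inf_assoc, inf_eq_right.2 (iInf₂_le A hA : ⨅ C ∈ F, ker C ≤ ker A)]

end

theorem even_dim_of_commuting_skewAdjoint_general {V : Type*} [NormedAddCommGroup V]
    [InnerProductSpace ℝ V] [FiniteDimensional ℝ V]
    (F : Set (V →ₗ[ℝ] V))
    (hskew : ∀ A ∈ F, ∀ x y : V, ⟪A x, y⟫ = - ⟪x, A y⟫)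
    (hcomm : ∀ A ∈ F, ∀ C ∈ F, A ∘ₗ C = C ∘ₗ A)
    (hker : (⨅ A ∈ F, LinearMap.ker A) = ⊥) :
    Even (Module.finrank ℝ V) := by
  have h := even_finrank_inf_iInf_ker_iff hskew hcomm ⊤ fun _ _ _ _ => Submodule.mem_top
  rwa [hker, inf_bot_eq, finrank_bot, finrank_top, iff_true_left Even.zero] at h

/-- If a nonzero finite-dimensional real inner product space admits a family of
pairwise commuting skew-adjoint endomorphisms with trivial common kernel, then its
dimension is even. -/
theorem even_dim_of_commuting_skewAdjoint {V : Type*} [NormedAddCommGroup V]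
    [InnerProductSpace ℝ V] [FiniteDimensional ℝ V] [Nontrivial V]
    (F : Set (V →ₗ[ℝ] V))
    (hskew : ∀ A ∈ F, ∀ x y : V, ⟪A x, y⟫ = - ⟪x, A y⟫)
    (hcomm : ∀ A ∈ F, ∀ C ∈ F, A ∘ₗ C = C ∘ₗ A)
    (hker : (⨅ A ∈ F, LinearMap.ker A) = ⊥) :
    Even (Module.finrank ℝ V) :=
  even_dim_of_commuting_skewAdjoint_general F hskew hcomm hker
end

section
/- In a nonabelian Milnor algebra g = S ⊕ [g,g], the derived ideal [g,g] has even (positive) dimension. -/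
open scoped RealInnerProductSpace
open Module
open scoped Matrix

/-! The maps `ad s`, `s ∈ S`, restrict to a commuting family of skew-adjoint endomorphisms of
`D = [g,g]` without common kernel: a common kernel vector is central, hence lies in `S ∩ Sᗮ = 0`.
Such a family forces even dimension. A single injective skew-adjoint `A` has
`det A = det Aᵀ = (-1)ⁿ det A ≠ 0`; in general a nonzero member `A` of the family is injective on
its range, while `ker A` is preserved by the family and has smaller dimension. -/

theorem Matrix.even_card_of_transpose_eq_neg {R n : Type*} [CommRing R] [IsDomain R] [Fintype n]
    [DecidableEq n] (hR : (-1 : R) ≠ 1) {M : Matrix n n R} (hM : Mᵀ = -M) (hdet : M.det ≠ 0) :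
    Even (Fintype.card n) := by
  have h : (-1 : R) ^ Fintype.card n * M.det = 1 * M.det := by
    rw [one_mul, ← Matrix.det_neg, ← hM, Matrix.det_transpose]
  exact (neg_one_pow_eq_one_iff_even hR).mp (mul_right_cancel₀ hdet h)

namespace LinearMap

variable {E : Type*} [NormedAddCommGroup E] [InnerProductSpace ℝ E]

theorem eq_zero_of_mem_range_of_skew {A : E →ₗ[ℝ] E} (hA : ∀ x y, ⟪A x, y⟫ = -⟪x, A y⟫)
    {x : E} (hx : x ∈ range A) (hAx : A x = 0) : x = 0 := by
  obtain ⟨u, rfl⟩ := hx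
  rw [← inner_self_eq_zero (𝕜 := ℝ), hA, hAx, inner_zero_right, neg_zero]

theorem skew_restrict {A : E →ₗ[ℝ] E} (hA : ∀ x y, ⟪A x, y⟫ = -⟪x, A y⟫)
    {p : Submodule ℝ E} (hp : ∀ x ∈ p, A x ∈ p) (x y : p) :
    ⟪A.restrict hp x, y⟫ = -⟪x, A.restrict hp y⟫ :=
  hA x y

variable [FiniteDimensional ℝ E]

theorem even_finrank_of_skew_of_injective {A : E →ₗ[ℝ] E}
    (hA : ∀ x y, ⟪A x, y⟫ = -⟪x, A y⟫) (hinj : Function.Injective A) :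
    Even (finrank ℝ E) := by
  let b := (stdOrthonormalBasis ℝ E).toBasis
  have hadj : adjoint A = -A := by
    refine ((eq_adjoint_iff _ _).mpr fun x y => ?_).symm
    rw [neg_apply, inner_neg_left, hA, neg_neg]
  have hM : (toMatrix b b A)ᵀ = -toMatrix b b A := by
    rw [← Matrix.conjTranspose_eq_transpose_of_trivial, ← toMatrix_adjoint, hadj, map_neg]
  have hdet : (toMatrix b b A).det ≠ 0 := by
    rw [det_toMatrix]
    exact (isUnit_det A ((isUnit_iff_ker_eq_bot A).mpr (ker_eq_bot.mpr hinj))).ne_zero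
  simpa using Matrix.even_card_of_transpose_eq_neg (by norm_num) hM hdet

theorem even_finrank_of_commuting_skew {ι : Type*} (A : ι → E →ₗ[ℝ] E)
    (hskew : ∀ i x y, ⟪A i x, y⟫ = -⟪x, A i y⟫) (hcomm : ∀ i j, Commute (A i) (A j))
    (hker : ∀ x, (∀ i, A i x = 0) → x = 0) : Even (finrank ℝ E) := by
  induction hn : finrank ℝ E using Nat.strong_induction_on generalizing E with
  | _ n ih =>
    by_cases hzero : ∀ i, A i = 0
    · have : Subsingleton E :=
        subsingleton_of_forall_eq 0 fun x => hker x fun i => by simp [hzero i]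
      rw [← hn, finrank_zero_of_subsingleton]
      exact Even.zero
    obtain ⟨i, hi⟩ := not_forall.mp hzero
    have hrange : Even (finrank ℝ (range (A i))) := by
      refine even_finrank_of_skew_of_injective
        (skew_restrict (hskew i) fun x _ => mem_range_self _ x)
        ((injective_iff_map_eq_zero _).mpr fun x hx => Subtype.ext ?_)
      exact eq_zero_of_mem_range_of_skew (hskew i) x.2 (congrArg Subtype.val hx)
    have hmapK (j : ι) : ∀ x ∈ ker (A i), A j x ∈ ker (A i) := fun x hx => by
      rw [mem_ker, ← Module.End.mul_apply, (hcomm i j).eq, Module.End.mul_apply, mem_ker.mp hx,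
        map_zero]
    have hdim := finrank_range_add_finrank_ker (A i)
    have hpos : 0 < finrank ℝ (range (A i)) :=
      Submodule.one_le_finrank_iff.mpr (range_eq_bot.not.mpr hi)
    have hkernel : Even (finrank ℝ (ker (A i))) :=
      ih _ (by omega) (fun j => (A j).restrict (hmapK j)) (fun j => skew_restrict (hskew j) _)
        (fun j k => restrict_commute (hcomm j k) _ _)
        (fun x hx => Subtype.ext (hker x fun j => congrArg Subtype.val (hx j))) rfl
    rw [← hn, ← hdim]
    exact hrange.add hkernel

end LinearMap

/-- In a nonabelian Milnor algebra, the derived ideal `[g,g]` has even positive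
dimension. -/
theorem milnor_derived_even_dim {V : Type*} [NormedAddCommGroup V]
    [InnerProductSpace ℝ V] [FiniteDimensional ℝ V]
    (B : V →ₗ[ℝ] V →ₗ[ℝ] V)
    (hanti : ∀ x y : V, B x y = - B y x)
    (hjac : ∀ x y z : V, B x (B y z) = B (B x y) z + B y (B x z))
    (S : Set V)
    (hS : S = {x : V | ∀ y z : V, ⟪B x y, z⟫ + ⟪y, B x z⟫ = 0})
    (D : Submodule ℝ V)
    (hD : D = Submodule.span ℝ {w : V | ∃ x y : V, B x y = w})
    (hSab : ∀ x ∈ S, ∀ y ∈ S, B x y = 0)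
    (hDab : ∀ u ∈ D, ∀ v ∈ D, B u v = 0)
    (hperp : ∀ v : V, v ∈ D ↔ ∀ s ∈ S, ⟪s, v⟫ = 0)
    (hnonab : ∃ x y : V, B x y ≠ 0) :
    0 < Module.finrank ℝ D ∧ Even (Module.finrank ℝ D) := by
  obtain ⟨x₀, y₀, hxy⟩ := hnonab
  have hBD (x w : V) : B x w ∈ D := hD ▸ Submodule.subset_span ⟨x, w, rfl⟩
  have hskew : ∀ s ∈ S, ∀ y z, ⟪B s y, z⟫ = -⟪y, B s z⟫ := fun s hs y z => by
    rw [hS] at hs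
    exact eq_neg_of_add_eq_zero_left (hs y z)
  have hcomm : ∀ s ∈ S, ∀ t ∈ S, Commute (B s) (B t) := fun s hs t ht => LinearMap.ext fun x => by
    rw [Module.End.mul_apply, Module.End.mul_apply, hjac s t x, hSab s hs t ht, map_zero,
      LinearMap.zero_apply, zero_add]
  have hspan : Submodule.span ℝ S ⊔ D = ⊤ := by
    refine eq_top_mono (sup_le_sup_left ?_ _) Submodule.sup_orthogonal_of_hasOrthogonalProjection
    exact fun v hv => (hperp v).mpr fun s hs => hv s (Submodule.subset_span hs)
  have hcentre : ∀ v ∈ D, (∀ s ∈ S, B s v = 0) → v = 0 := by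
    intro v hv hSv
    have hBv : B v = 0 := by
      refine LinearMap.ker_eq_top.mp (eq_top_mono (sup_le ?_ fun d hd => hDab v hv d hd) hspan)
      exact Submodule.span_le.mpr fun s hs => by
        rw [SetLike.mem_coe, LinearMap.mem_ker, hanti, hSv s hs, neg_zero]
    have hvS : v ∈ S := hS ▸ fun y z => by simp [hBv]
    exact inner_self_eq_zero.mp ((hperp v).mp hv v hvS)
  refine ⟨Submodule.one_le_finrank_iff.mpr ((Submodule.ne_bot_iff D).mpr ⟨_, hBD x₀ y₀, hxy⟩), ?_⟩
  exact LinearMap.even_finrank_of_commuting_skew (fun s : S => (B s).restrict fun w _ => hBD s w)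
    (fun s => LinearMap.skew_restrict (hskew s s.2) _)
    (fun s t => LinearMap.restrict_commute (hcomm s s.2 t t.2) _ _)
    (fun w hw => Subtype.ext (hcentre w w.2 fun s hs => congrArg Subtype.val (hw ⟨s, hs⟩)))
end

section
/- Let ℝ⁴ have basis e₁,e₂,e₃,e₄ and a,b,c,d,e ∈ ℝ. Define the antisymmetric bilinear bracket by [e₁,e₂]=0, [e₁,e₃]=c·e₃, [e₁,e₄]=c·e₄, [e₂,e₃]=d·e₃−e·e₄, [e₂,e₄]=e·e₃+d·e₄, [e₃,e₄]=a·e₁+b·e₂. Then the Jacobi identity holds if and only if (a = 0 and b = 0) or (c = 0 and d = 0). -/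
/-!
The Jacobiator of `bra4` is trilinear and alternating, and it is supported on the triples
`(e₁,e₃,e₄)` and `(e₂,e₃,e₄)`, where it equals `-2c[e₃,e₄]` and `-2d[e₃,e₄]`. Hence it factors as
a scalar alternating 3-form, which vanishes identically exactly when `c = d = 0`, times the
fixed vector `[e₃,e₄] = a·e₁ + b·e₂`.
-/

/-- The bilinear antisymmetric bracket on `ℝ⁴` determined by `[e₁,e₂]=0`,
`[e₁,e₃]=c·e₃`, `[e₁,e₄]=c·e₄`, `[e₂,e₃]=d·e₃−e·e₄`, `[e₂,e₄]=e·e₃+d·e₄`,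
`[e₃,e₄]=a·e₁+b·e₂`. -/
def bra4 (a b c d e : ℝ) (x y : Fin 4 → ℝ) : Fin 4 → ℝ :=
  ![a * (x 2 * y 3 - x 3 * y 2),
    b * (x 2 * y 3 - x 3 * y 2),
    c * (x 0 * y 2 - x 2 * y 0) + d * (x 1 * y 2 - x 2 * y 1)
      + e * (x 1 * y 3 - x 3 * y 1),
    c * (x 0 * y 3 - x 3 * y 0) - e * (x 1 * y 2 - x 2 * y 1)
      + d * (x 1 * y 3 - x 3 * y 1)]

/-- The alternating 3-form `(c·e₁* + d·e₂*) ∧ e₃* ∧ e₄*` on `ℝ⁴`. -/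
def bra4Form (c d : ℝ) (x y z : Fin 4 → ℝ) : ℝ :=
  Matrix.det !![c * x 0 + d * x 1, x 2, x 3;
                c * y 0 + d * y 1, y 2, y 3;
                c * z 0 + d * z 1, z 2, z 3]

theorem bra4_jacobiator (a b c d e : ℝ) (x y z : Fin 4 → ℝ) :
    bra4 a b c d e x (bra4 a b c d e y z)
        + bra4 a b c d e y (bra4 a b c d e z x)
        + bra4 a b c d e z (bra4 a b c d e x y)
      = (-2 * bra4Form c d x y z) • ![a, b, 0, 0] := by
  funext i
  fin_cases i <;> simp [bra4, bra4Form, Matrix.det_fin_three] <;> ring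

theorem bra4Form_eq_zero_iff (c d : ℝ) :
    (∀ x y z : Fin 4 → ℝ, bra4Form c d x y z = 0) ↔ c = 0 ∧ d = 0 := by
  refine ⟨fun h => ⟨?_, ?_⟩, ?_⟩
  · simpa [bra4Form, Matrix.det_fin_three] using h ![1, 0, 0, 0] ![0, 0, 1, 0] ![0, 0, 0, 1]
  · simpa [bra4Form, Matrix.det_fin_three] using h ![0, 1, 0, 0] ![0, 0, 1, 0] ![0, 0, 0, 1]
  · rintro ⟨rfl, rfl⟩ x y z
    simp [bra4Form, Matrix.det_fin_three]

/-- The above bracket on `ℝ⁴` satisfies the Jacobi identity if and only if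
`(a = 0 ∧ b = 0)` or `(c = 0 ∧ d = 0)`. -/
theorem bra4_jacobi_iff (a b c d e : ℝ) :
    (∀ x y z : Fin 4 → ℝ,
        bra4 a b c d e x (bra4 a b c d e y z)
          + bra4 a b c d e y (bra4 a b c d e z x)
          + bra4 a b c d e z (bra4 a b c d e x y) = 0) ↔
      ((a = 0 ∧ b = 0) ∨ (c = 0 ∧ d = 0)) := by
  have hv : (![a, b, 0, 0] : Fin 4 → ℝ) = 0 ↔ a = 0 ∧ b = 0 := by
    simp [funext_iff, Fin.forall_fin_succ]
  simp only [bra4_jacobiator, smul_eq_zero, mul_eq_zero, neg_eq_zero, two_ne_zero, false_or,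
    forall_or_right, bra4Form_eq_zero_iff, hv]
  exact or_comm
end
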